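/- Let ABCD be a quadrilateral with perpendicular diagonals AC ⊥ BD meeting at P, and let E, F, G, H be the orthocenters of triangles BCD, CDA, DAB, ABC respectively. Then lines EG and FH also meet at P; that is, the diagonal point of EFGH coincides with the diagonal point of ABCD. -/

import Mathlib

/-- `X` is the orthocenter of triangle `PQR`: it lies on all three altitudes. -/
def IsOrthocenter (X P Q R : EuclideanSpace ℝ (Fin 2)) : Prop :=
  (inner ℝ (X - P) (Q - R) : ℝ) = 0 ∧ (inner ℝ (X - Q) (R - P) : ℝ) = 0 ∧
    (inner ℝ (X - R) (P - Q) : ℝ) = 0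

/-!
Because `AC ⊥ BD`, the altitude of `BCD` from `C` and the altitude of `DAB` from `A` are both
the line `AC`, so `E` and `G` lie on `AC`, which passes through `P`. Symmetrically `F` and `H`
lie on `BD`. In the plane, the perpendicular to `BD` through `P` is a single line, hence the
collinearity.
-/

open Module RealInnerProductSpace

section

variable {V : Type*} [NormedAddCommGroup V] [InnerProductSpace ℝ V]

theorem collinear_of_inner_sub_eq_zero (hV : finrank ℝ V = 2) {w : V} (hw : w ≠ 0)
    {X P Y : V} (hX : ⟪X - P, w⟫ = 0) (hY : ⟪Y - P, w⟫ = 0) :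
    Collinear ℝ ({X, P, Y} : Set V) := by
  have : Fact (finrank ℝ V = 1 + 1) := ⟨hV⟩
  have : FiniteDimensional ℝ V := .of_fact_finrank_eq_succ 1
  have hspan : vectorSpan ℝ ({X, P, Y} : Set V) ≤ (ℝ ∙ w)ᗮ := by
    rw [vectorSpan_eq_span_vsub_set_right ℝ (by simp : P ∈ ({X, P, Y} : Set V)),
      Submodule.span_le]
    rintro _ ⟨Q, hQ, rfl⟩
    rw [SetLike.mem_coe, Submodule.mem_orthogonal_singleton_iff_inner_right, real_inner_comm]
    rcases hQ with rfl | rfl | rfl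
    exacts [hX, by simp, hY]
  rw [collinear_iff_finrank_le_one]
  exact (Submodule.finrank_mono hspan).trans (Submodule.finrank_orthogonal_span_singleton hw).le

theorem inner_sub_eq_zero_of_mem_affineSpan_pair {A C P Q X w : V} (hAC : ⟪C - A, w⟫ = 0)
    (hP : P ∈ line[ℝ, A, C]) (hQ : Q ∈ line[ℝ, A, C]) (hX : ⟪X - Q, w⟫ = 0) :
    ⟪X - P, w⟫ = 0 := by
  have hQP : Q -ᵥ P ∈ vectorSpan ℝ {A, C} := by
    rw [← direction_affineSpan]
    exact AffineSubspace.vsub_mem_direction hQ hP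
  rw [vectorSpan_pair, vsub_eq_sub, vsub_eq_sub] at hQP
  obtain ⟨t, ht⟩ := Submodule.mem_span_singleton.1 hQP
  rw [← sub_add_sub_cancel X Q P, inner_add_left, hX, ← ht, real_inner_smul_left,
    ← neg_sub C A, inner_neg_left, hAC]
  simp

/-- If the line `AC` through `P` is perpendicular to `w`, then the perpendiculars to `w`
through `A` and through `C` are that same line. -/
theorem collinear_of_inner_sub_eq_zero_of_mem_affineSpan_pair (hV : finrank ℝ V = 2)
    {A C P X Y w : V} (hw : w ≠ 0) (hAC : ⟪C - A, w⟫ = 0) (hP : P ∈ line[ℝ, A, C])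
    (hX : ⟪X - C, w⟫ = 0) (hY : ⟪Y - A, w⟫ = 0) :
    Collinear ℝ ({X, P, Y} : Set V) :=
  collinear_of_inner_sub_eq_zero hV hw
    (inner_sub_eq_zero_of_mem_affineSpan_pair hAC hP (right_mem_affineSpan_pair ℝ A C) hX)
    (inner_sub_eq_zero_of_mem_affineSpan_pair hAC hP (left_mem_affineSpan_pair ℝ A C) hY)

end

theorem orthodiagonal_orthocenter_same_diagonal_point_general
    (A B C D P E F G H : EuclideanSpace ℝ (Fin 2))
    (hconv : P ∈ segment ℝ A C ∧ P ∈ segment ℝ B D)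
    (hperp : (inner ℝ (C - A) (D - B) : ℝ) = 0)
    (h₃ : ¬ Collinear ℝ ({A, C, D} : Set (EuclideanSpace ℝ (Fin 2))))
    (h₄ : ¬ Collinear ℝ ({B, C, D} : Set (EuclideanSpace ℝ (Fin 2))))
    (hE : IsOrthocenter E B C D)
    (hF : IsOrthocenter F C D A)
    (hG : IsOrthocenter G D A B)
    (hH : IsOrthocenter H A B C) :
    Collinear ℝ ({E, P, G} : Set (EuclideanSpace ℝ (Fin 2))) ∧
    Collinear ℝ ({F, P, H} : Set (EuclideanSpace ℝ (Fin 2))) := by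
  have hplane : finrank ℝ (EuclideanSpace ℝ (Fin 2)) = 2 := finrank_euclideanSpace_fin
  have hCA : C - A ≠ 0 := sub_ne_zero.2 (ne₁₂_of_not_collinear h₃).symm
  have hDB : D - B ≠ 0 := sub_ne_zero.2 (ne₁₃_of_not_collinear h₄).symm
  have hPAC : P ∈ line[ℝ, A, C] := (mem_segment_iff_wbtw.1 hconv.1).mem_affineSpan
  have hPBD : P ∈ line[ℝ, B, D] := (mem_segment_iff_wbtw.1 hconv.2).mem_affineSpan
  have hG' : ⟪G - A, D - B⟫ = 0 := by rw [← neg_sub B D, inner_neg_right, hG.2.1, neg_zero]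
  have hF' : ⟪F - D, C - A⟫ = 0 := by rw [← neg_sub A C, inner_neg_right, hF.2.1, neg_zero]
  exact ⟨collinear_of_inner_sub_eq_zero_of_mem_affineSpan_pair hplane hDB hperp hPAC hE.2.1 hG',
    collinear_of_inner_sub_eq_zero_of_mem_affineSpan_pair hplane hCA
      ((real_inner_comm (C - A) (D - B)).trans hperp) hPBD hF' hH.2.1⟩

theorem orthodiagonal_orthocenter_same_diagonal_point
    (A B C D P E F G H : EuclideanSpace ℝ (Fin 2))
    (hconv : P ∈ segment ℝ A C ∧ P ∈ segment ℝ B D)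
    (hperp : (inner ℝ (C - A) (D - B) : ℝ) = 0)
    (h₁ : ¬ Collinear ℝ ({A, B, C} : Set (EuclideanSpace ℝ (Fin 2))))
    (h₂ : ¬ Collinear ℝ ({A, B, D} : Set (EuclideanSpace ℝ (Fin 2))))
    (h₃ : ¬ Collinear ℝ ({A, C, D} : Set (EuclideanSpace ℝ (Fin 2))))
    (h₄ : ¬ Collinear ℝ ({B, C, D} : Set (EuclideanSpace ℝ (Fin 2))))
    (hE : IsOrthocenter E B C D)
    (hF : IsOrthocenter F C D A)
    (hG : IsOrthocenter G D A B)
    (hH : IsOrthocenter H A B C) :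
    Collinear ℝ ({E, P, G} : Set (EuclideanSpace ℝ (Fin 2))) ∧
    Collinear ℝ ({F, P, H} : Set (EuclideanSpace ℝ (Fin 2))) :=
  orthodiagonal_orthocenter_same_diagonal_point_general A B C D P E F G H hconv hperp h₃ h₄ hE hF hG
    hH
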